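/- arXiv:2605.02385 — 6 statements merged into one kernel-verified Lean document; each statement's English description precedes it below -/
import Mathlib

section
/- Let A and B be finite nonempty index types, let U be a unitary complex matrix indexed by A × B, let σ be a positive semidefinite complex matrix indexed by A × B, and let D be a real diagonal matrix indexed by B with 0 ⪯ D ⪯ I. Define ρ_D = Tr_B(U σ U† (I_A ⊗ D)) and ρ_I = Tr_B(U σ U†), where Tr_B denotes the partial trace over B, i.e. (Tr_B M)(a,a') = ∑_{b} M((a,b),(a',b)). Then ρ_I − ρ_D is positive semidefinite, i.e. ρ_D ⪯ ρ_I in the Loewner order. -/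
/-!
Writing `M = U σ U†` (positive semidefinite) and `M_b` for its diagonal block at `b ∈ B`,
`Tr_B (M (I ⊗ D)) = ∑ b, d b • M_b`, so `ρ_I - ρ_D = ∑ b, (1 - d b) • M_b` is a sum of
positive semidefinite matrices with nonnegative weights.
-/

open Matrix ComplexOrder Kronecker

/-- Partial trace over the second factor `B` of a matrix indexed by `A × B`. -/
noncomputable def ptraceB {A B : Type*} [Fintype A] [Fintype B]
    (M : Matrix (A × B) (A × B) ℂ) : Matrix A A ℂ :=
  Matrix.of fun a a' => ∑ b : B, M (a, b) (a', b)

section PartialTrace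

variable {A B : Type*} [Fintype A] [Fintype B]

lemma ptraceB_sub (M N : Matrix (A × B) (A × B) ℂ) :
    ptraceB (M - N) = ptraceB M - ptraceB N := by
  ext a a'
  simp [ptraceB, Finset.sum_sub_distrib]

lemma ptraceB_mul_diagonal_snd [DecidableEq A] [DecidableEq B]
    (M : Matrix (A × B) (A × B) ℂ) (c : B → ℂ) :
    ptraceB (M * diagonal fun p => c p.2) =
      ∑ b, c b • M.submatrix (fun a => (a, b)) (fun a => (a, b)) := by
  ext a a'
  simp [ptraceB, mul_diagonal, Matrix.sum_apply, mul_comm]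

lemma Matrix.PosSemidef.ptraceB_mul_diagonal_snd [DecidableEq A] [DecidableEq B]
    {M : Matrix (A × B) (A × B) ℂ} (hM : M.PosSemidef) {c : B → ℂ} (hc : ∀ b, 0 ≤ c b) :
    (ptraceB (M * diagonal fun p => c p.2)).PosSemidef := by
  rw [_root_.ptraceB_mul_diagonal_snd]
  exact posSemidef_sum _ fun b _ => (hM.submatrix _).smul (hc b)

end PartialTrace

theorem postSelected_le_partialTrace_general
    {A B : Type*} [Fintype A] [Fintype B]
    [DecidableEq A] [DecidableEq B]
    (U : Matrix (A × B) (A × B) ℂ)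
    (σ : Matrix (A × B) (A × B) ℂ) (hσ : σ.PosSemidef)
    (d : B → ℝ) (hd1 : ∀ b, d b ≤ 1) :
    (ptraceB (U * σ * Uᴴ) -
      ptraceB (U * σ * Uᴴ * ((1 : Matrix A A ℂ) ⊗ₖ
        Matrix.diagonal fun b => (d b : ℂ)))).PosSemidef := by
  have one_kronecker : (1 : Matrix A A ℂ) ⊗ₖ diagonal (fun b => (d b : ℂ)) =
      diagonal fun p => (d p.2 : ℂ) := by
    rw [← diagonal_one, diagonal_kronecker_diagonal]
    simp only [one_mul]
  set M := U * σ * Uᴴ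
  have sub_eq : M - M * diagonal (fun p => (d p.2 : ℂ)) =
      M * diagonal fun p => (1 - d p.2 : ℂ) := by
    ext i j
    simp [mul_diagonal, mul_sub]
  rw [one_kronecker, ← ptraceB_sub, sub_eq]
  exact (hσ.mul_mul_conjTranspose_same U).ptraceB_mul_diagonal_snd (c := fun b => 1 - (d b : ℂ))
    fun b => sub_nonneg.mpr (mod_cast hd1 b)

/-- For a unitary `U`, a positive semidefinite `σ` (both indexed by `A × B`), and a real
diagonal matrix `D = diag d` on `B` with `0 ⪯ D ⪯ I`, the post-selected output
`ρ_D = Tr_B (U σ U† (I_A ⊗ D))` satisfies `ρ_D ⪯ ρ_I = Tr_B (U σ U†)` in the Loewner order. -/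
theorem postSelected_le_partialTrace
    {A B : Type*} [Fintype A] [Fintype B] [Nonempty A] [Nonempty B]
    [DecidableEq A] [DecidableEq B]
    (U : Matrix (A × B) (A × B) ℂ) (hU : U ∈ Matrix.unitaryGroup (A × B) ℂ)
    (σ : Matrix (A × B) (A × B) ℂ) (hσ : σ.PosSemidef)
    (d : B → ℝ) (hd0 : ∀ b, 0 ≤ d b) (hd1 : ∀ b, d b ≤ 1) :
    (ptraceB (U * σ * Uᴴ) -
      ptraceB (U * σ * Uᴴ * ((1 : Matrix A A ℂ) ⊗ₖ
        Matrix.diagonal fun b => (d b : ℂ)))).PosSemidef :=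
  postSelected_le_partialTrace_general U σ hσ d hd1
end

section
/- Let ρ_D and ρ_I be positive semidefinite complex n × n matrices with ρ_D ⪯ ρ_I, let τ be a positive semidefinite n × n matrix with trace 1, and let λ ∈ (0, 1]. Define the depolarizing channel Δ_λ(ρ) = (1−λ)ρ + λ·I/n. Then −Tr(τ · log Δ_λ(ρ_I)) ≤ −Tr(τ · log Δ_λ(ρ_D)), where log denotes the matrix logarithm obtained by applying the real logarithm to the eigenvalues in a spectral decomposition of the (positive definite) Hermitian argument. -/
/-!
The matrix logarithm is operator monotone on positive definite matrices, and the depolarizing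
channel preserves the Loewner order while mapping positive semidefinite matrices to positive
definite ones. Hence `log Δ_λ(ρ_D) ⪯ log Δ_λ(ρ_I)`, and pairing this with the state `τ` through
`Tr(τ X) ≥ 0` for `X ⪰ 0` gives the inequality.
-/

open Matrix ComplexOrder

/-- Matrix logarithm of a Hermitian matrix, obtained by applying the real logarithm to the
eigenvalues in a spectral decomposition (and `0` on non-Hermitian input). -/
noncomputable def matLog {n : Type*} [Fintype n] [DecidableEq n]
    (H : Matrix n n ℂ) : Matrix n n ℂ :=
  if hH : H.IsHermitian then
    (hH.eigenvectorUnitary : Matrix n n ℂ) *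
      Matrix.diagonal (fun i => (Real.log (hH.eigenvalues i) : ℂ)) *
      star (hH.eigenvectorUnitary : Matrix n n ℂ)
  else 0

/-- The depolarizing channel `Δ_λ(ρ) = (1 - λ) ρ + λ I / n` on `n × n` complex matrices. -/
noncomputable def depol {n : Type*} [Fintype n] [DecidableEq n]
    (l : ℝ) (ρ : Matrix n n ℂ) : Matrix n n ℂ :=
  ((1 - l : ℝ) : ℂ) • ρ + ((l / (Fintype.card n) : ℝ) : ℂ) • (1 : Matrix n n ℂ)

-- The C⋆-algebra structure on matrices, needed for `CFC.log_le_log`, uses the L2 operator norm.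
open scoped MatrixOrder Matrix.Norms.L2Operator

variable {n : Type*} [Fintype n] [DecidableEq n]

lemma Matrix.IsHermitian.matLog_eq_log {H : Matrix n n ℂ} (hH : H.IsHermitian) :
    matLog H = CFC.log H := by
  rw [matLog, dif_pos hH, CFC.log, hH.cfc_eq, IsHermitian.cfc, Unitary.conjStarAlgAut_apply]
  rfl

lemma matLog_le_matLog {A B : Matrix n n ℂ} (hA : A.PosDef) (hAB : A ≤ B) :
    matLog A ≤ matLog B := by
  have hB : B.PosDef := (hA.isStrictlyPositive.of_le hAB).posDef
  rw [hA.isHermitian.matLog_eq_log, hB.isHermitian.matLog_eq_log]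
  exact CFC.log_le_log hAB hA.isStrictlyPositive

lemma Matrix.PosSemidef.trace_mul_nonneg {𝕜 : Type*} [RCLike 𝕜] {A B : Matrix n n 𝕜}
    (hA : A.PosSemidef) (hB : B.PosSemidef) : 0 ≤ (A * B).trace := by
  obtain ⟨C, rfl⟩ := CStarAlgebra.nonneg_iff_eq_star_mul_self.mp hA.nonneg
  rw [mul_assoc, trace_mul_comm]
  exact (hB.mul_mul_conjTranspose_same C).trace_nonneg

lemma depol_posDef [Nonempty n] {l : ℝ} (hl0 : 0 < l) (hl1 : l ≤ 1) {ρ : Matrix n n ℂ}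
    (hρ : ρ.PosSemidef) : (depol l ρ).PosDef := by
  have hcard : (0 : ℝ) < Fintype.card n := by exact_mod_cast Fintype.card_pos
  refine PosDef.posSemidef_add (hρ.smul ?_) (PosDef.one.smul ?_)
  · exact_mod_cast sub_nonneg.mpr hl1
  · exact_mod_cast div_pos hl0 hcard

lemma depol_mono {l : ℝ} (hl1 : l ≤ 1) {ρ σ : Matrix n n ℂ} (h : ρ ≤ σ) :
    depol l ρ ≤ depol l σ := by
  unfold depol
  gcongr

theorem crossEntropy_anti_of_loewner_le_general
    {n : ℕ} (hn : 0 < n)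
    (ρD ρI τ : Matrix (Fin n) (Fin n) ℂ)
    (hρD : ρD.PosSemidef)
    (hle : (ρI - ρD).PosSemidef)
    (hτ : τ.PosSemidef)
    (l : ℝ) (hl0 : 0 < l) (hl1 : l ≤ 1) :
    -(τ * matLog (depol l ρI)).trace.re ≤ -(τ * matLog (depol l ρD)).trace.re := by
  have : Nonempty (Fin n) := ⟨⟨0, hn⟩⟩
  have hlog : matLog (depol l ρD) ≤ matLog (depol l ρI) :=
    matLog_le_matLog (depol_posDef hl0 hl1 hρD) (depol_mono hl1 (sub_nonneg.mp hle.nonneg))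
  have hpair := Complex.nonneg_iff.mp (hτ.trace_mul_nonneg (sub_nonneg.mpr hlog).posSemidef)
  rw [mul_sub, trace_sub, Complex.sub_re] at hpair
  linarith [hpair.1]

/-- If `ρ_D ⪯ ρ_I` are positive semidefinite, `τ` is a state (psd, trace one), and
`λ ∈ (0,1]`, then `-Tr(τ log Δ_λ(ρ_I)) ≤ -Tr(τ log Δ_λ(ρ_D))`. -/
theorem crossEntropy_anti_of_loewner_le
    {n : ℕ} (hn : 0 < n)
    (ρD ρI τ : Matrix (Fin n) (Fin n) ℂ)
    (hρD : ρD.PosSemidef) (hρI : ρI.PosSemidef)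
    (hle : (ρI - ρD).PosSemidef)
    (hτ : τ.PosSemidef) (hτtr : τ.trace = 1)
    (l : ℝ) (hl0 : 0 < l) (hl1 : l ≤ 1) :
    -(τ * matLog (depol l ρI)).trace.re ≤ -(τ * matLog (depol l ρD)).trace.re :=
  crossEntropy_anti_of_loewner_le_general hn ρD ρI τ hρD hle hτ l hl0 hl1
end

section
/- Let ρ be a nonzero positive semidefinite complex n × n matrix, let τ be a positive semidefinite n × n matrix with trace 1, let λ ∈ (0, 1], and let 0 ≤ t₁ ≤ t₂. With N_t(ρ) = ρ / max(Tr ρ, t) and Δ_λ(X) = (1−λ)X + λ·I/n, we have −Tr(τ · log Δ_λ(N_{t₁}(ρ))) ≤ −Tr(τ · log Δ_λ(N_{t₂}(ρ))), where log denotes the matrix logarithm obtained by applying the real logarithm to the eigenvalues in a spectral decomposition of the (positive definite) Hermitian argument. Hence the cross-entropy loss L_t is monotone nondecreasing in the hyperparameter t. -/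
open Matrix ComplexOrder

/-- Thresholded normalization `N_t(ρ) = ρ / max (Tr ρ) t` (the trace of a positive
semidefinite matrix is real, and is taken via the real part). -/
noncomputable def normThresh {n : Type*} [Fintype n]
    (t : ℝ) (ρ : Matrix n n ℂ) : Matrix n n ℂ :=
  (max ρ.trace.re t)⁻¹ • ρ

/-! Both matrices inside the logarithm are of the form `a • ρ + b • 1` with the same
`b = λ / n > 0` and `a = (1 - λ) / max (Tr ρ) t ≥ 0`, which decreases as `t` grows. Hence both
logarithms are functions of `ρ`, namely `x ↦ log (a x + b)` applied by the functional calculus,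
and on the nonnegative spectrum of `ρ` this function is pointwise monotone in `a`. So the two
logarithms are Loewner-ordered, and `X ↦ Tr (τ X)` is monotone for `τ ≥ 0`. -/

open scoped MatrixOrder

section
variable {n : Type*} [Fintype n]

lemma Matrix.PosSemidef.re_trace_pos {A : Matrix n n ℂ} (hA : A.PosSemidef) (hA0 : A ≠ 0) :
    0 < A.trace.re :=
  (Complex.lt_def.mp (hA.trace_nonneg.lt_of_ne' (hA.trace_eq_zero_iff.not.mpr hA0))).1

variable [DecidableEq n]

lemma matLog_eq_cfc {H : Matrix n n ℂ} (hH : H.IsHermitian) : matLog H = cfc Real.log H := by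
  rw [matLog, dif_pos hH, hH.cfc_eq Real.log]
  rfl

lemma re_trace_mul_nonneg {A B : Matrix n n ℂ} (hA : 0 ≤ A) (hB : 0 ≤ B) :
    0 ≤ (A * B).trace.re := by
  obtain ⟨C, rfl⟩ := CStarAlgebra.nonneg_iff_eq_star_mul_self.mp hB
  rw [← Matrix.mul_assoc, trace_mul_cycle]
  exact (Complex.nonneg_iff.mp (star_right_conjugate_nonneg hA C).posSemidef.trace_nonneg).1

lemma re_trace_mul_le_re_trace_mul {A B C : Matrix n n ℂ} (hA : 0 ≤ A) (hBC : B ≤ C) :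
    (A * B).trace.re ≤ (A * C).trace.re := by
  have := re_trace_mul_nonneg hA (sub_nonneg.mpr hBC)
  rwa [Matrix.mul_sub, trace_sub, Complex.sub_re, sub_nonneg] at this

lemma cfc_smul_add_smul_one {A : Matrix n n ℂ} (hA : A.IsHermitian) (g : ℝ → ℝ) (a b : ℝ) :
    cfc g (a • A + b • 1) = cfc (fun x => g (a * x + b)) A := by
  have hA' : IsSelfAdjoint A := hA
  have hfin := A.finite_real_spectrum
  rw [cfc_comp' g (fun x => a * x + b) A ((hfin.image _).continuousOn _) (hfin.continuousOn _),
    cfc_add_const b _ A (hfin.continuousOn _), cfc_const_mul_id a A, Algebra.algebraMap_eq_smul_one]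

lemma matLog_smul_add_smul_one_le {A : Matrix n n ℂ} (hA : 0 ≤ A) {a₁ a₂ b : ℝ}
    (ha₂ : 0 ≤ a₂) (ha : a₂ ≤ a₁) (hb : 0 < b) :
    matLog (a₂ • A + b • 1) ≤ matLog (a₁ • A + b • 1) := by
  have hH := hA.posSemidef.isHermitian
  have hH' (c : ℝ) : (c • A + b • 1).IsHermitian :=
    ((IsSelfAdjoint.all c).smul hH.isSelfAdjoint).add
      ((IsSelfAdjoint.all b).smul (IsSelfAdjoint.one _))
  rw [matLog_eq_cfc (hH' _), matLog_eq_cfc (hH' _),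
    cfc_smul_add_smul_one hH, cfc_smul_add_smul_one hH]
  refine cfc_mono (fun x hx => ?_) (A.finite_real_spectrum.continuousOn _)
    (A.finite_real_spectrum.continuousOn _)
  have hx : 0 ≤ x := spectrum_nonneg_of_nonneg hA hx
  exact Real.log_le_log (by positivity) (by gcongr)

lemma depol_normThresh (l t : ℝ) (ρ : Matrix n n ℂ) :
    depol l (normThresh t ρ) =
      ((1 - l) / max ρ.trace.re t) • ρ + (l / Fintype.card n) • (1 : Matrix n n ℂ) := by
  rw [depol, normThresh, Complex.coe_smul, Complex.coe_smul, smul_smul, ← div_eq_mul_inv]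

end

theorem crossEntropyLoss_monotone_threshold_general
    {n : ℕ} (hn : 0 < n)
    (ρ τ : Matrix (Fin n) (Fin n) ℂ)
    (hρ : ρ.PosSemidef) (hρ0 : ρ ≠ 0)
    (hτ : τ.PosSemidef)
    (l : ℝ) (hl0 : 0 < l) (hl1 : l ≤ 1)
    (t₁ t₂ : ℝ) (ht : t₁ ≤ t₂) :
    -(τ * matLog (depol l (normThresh t₁ ρ))).trace.re ≤
      -(τ * matLog (depol l (normThresh t₂ ρ))).trace.re := by
  have hc₁ : 0 < max ρ.trace.re t₁ := (hρ.re_trace_pos hρ0).trans_le (le_max_left _ _)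
  rw [neg_le_neg_iff, depol_normThresh, depol_normThresh, Fintype.card_fin]
  refine re_trace_mul_le_re_trace_mul hτ.nonneg
    (matLog_smul_add_smul_one_le hρ.nonneg ?_ ?_ (by positivity))
  · exact div_nonneg (sub_nonneg.mpr hl1) (hc₁.trans_le (max_le_max_left _ ht)).le
  · exact div_le_div_of_nonneg_left (sub_nonneg.mpr hl1) hc₁ (max_le_max_left _ ht)

/-- Monotonicity of the cross-entropy loss in the threshold hyperparameter `t`:
for a nonzero positive semidefinite `ρ`, a state `τ`, `λ ∈ (0,1]`, and `0 ≤ t₁ ≤ t₂`,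
`-Tr(τ log Δ_λ(N_{t₁}(ρ))) ≤ -Tr(τ log Δ_λ(N_{t₂}(ρ)))`. -/
theorem crossEntropyLoss_monotone_threshold
    {n : ℕ} (hn : 0 < n)
    (ρ τ : Matrix (Fin n) (Fin n) ℂ)
    (hρ : ρ.PosSemidef) (hρ0 : ρ ≠ 0)
    (hτ : τ.PosSemidef) (hτtr : τ.trace = 1)
    (l : ℝ) (hl0 : 0 < l) (hl1 : l ≤ 1)
    (t₁ t₂ : ℝ) (ht₁ : 0 ≤ t₁) (ht : t₁ ≤ t₂) :
    -(τ * matLog (depol l (normThresh t₁ ρ))).trace.re ≤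
      -(τ * matLog (depol l (normThresh t₂ ρ))).trace.re :=
  crossEntropyLoss_monotone_threshold_general hn ρ τ hρ hρ0 hτ l hl0 hl1 t₁ t₂ ht
end

section
/- Let ρ be a Hermitian complex n × n matrix and let τ be a Hermitian complex n × n matrix with Tr τ = 1. Define ρ_R = ρ + (1 − Tr ρ) · I/n. Then Tr((ρ_R − τ)²) − Tr((ρ − τ)²) = −(1 − Tr ρ)² / n. -/
open Matrix ComplexOrder

/-- MSE comparison identity: for Hermitian `ρ` and Hermitian `τ` with `Tr τ = 1`, the
randomized output `ρ_R = ρ + (1 - Tr ρ) I / n` satisfies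
`Tr((ρ_R - τ)²) - Tr((ρ - τ)²) = -(1 - Tr ρ)² / n`. -/
theorem mse_randomized_identity
    {n : ℕ} (hn : 0 < n)
    (ρ τ : Matrix (Fin n) (Fin n) ℂ)
    (hρ : ρ.IsHermitian) (hτ : τ.IsHermitian) (hτtr : τ.trace = 1) :
    (let ρR : Matrix (Fin n) (Fin n) ℂ :=
        ρ + (((1 : ℂ) - ρ.trace) / (n : ℂ)) • (1 : Matrix (Fin n) (Fin n) ℂ);
      ((ρR - τ) * (ρR - τ)).trace - ((ρ - τ) * (ρ - τ)).trace)
      = -((1 : ℂ) - ρ.trace) ^ 2 / (n : ℂ) := by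
  have hn' : (n : ℂ) ≠ 0 := Nat.cast_ne_zero.mpr hn.ne'
  set c : ℂ := ((1 : ℂ) - ρ.trace) / (n : ℂ) with hc
  set A : Matrix (Fin n) (Fin n) ℂ := ρ - τ with hA
  have h1 : ρ + c • (1 : Matrix (Fin n) (Fin n) ℂ) - τ = A + c • 1 := by
    rw [hA]; abel
  simp only [h1]
  have h2 : (A + c • (1 : Matrix (Fin n) (Fin n) ℂ)) * (A + c • 1)
      = A * A + c • A + c • A + (c * c) • 1 := by
    simp [mul_add, add_mul, smul_mul_assoc, mul_smul_comm, smul_smul]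
    abel
  rw [h2]
  simp only [trace_add, trace_smul, trace_one, smul_eq_mul, hA, trace_sub, hτtr]
  rw [Fintype.card_fin]
  rw [hc]
  field_simp
  ring
end

section
/- Let ρ be a positive semidefinite complex n × n matrix with Tr ρ ≤ 1 and let τ be a Hermitian complex n × n matrix with Tr τ = 1. Define ρ_R = ρ + (1 − Tr ρ) · I/n. Then Tr((ρ_R − τ)²) ≤ Tr((ρ − τ)²), with equality if and only if Tr ρ = 1 (i.e., if and only if no probability weight is post-selected away). -/
open Matrix ComplexOrder

/-!
Write `A = ρ - τ` and `c = (1 - Tr ρ) / n`, so that `ρ_R - τ = A + c I`. Since `Tr τ = 1`,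
`Tr A = -c n`, and expanding the square gives
`Tr((A + c I)²) = Tr(A²) + 2 c Tr A + c² n = Tr(A²) - c² n`.
As `ρ` is Hermitian, `c` is real, so the correction `c² n` is nonnegative and vanishes exactly
when `Tr ρ = 1`.
-/

namespace Matrix

variable {m : Type*} [Fintype m]

theorem IsHermitian.ofReal_re_trace {A : Matrix m m ℂ} (hA : A.IsHermitian) :
    (A.trace.re : ℂ) = A.trace :=
  Complex.conj_eq_iff_re.mp <| by rw [starRingEnd_apply, ← trace_conjTranspose, hA.eq]

variable [DecidableEq m]

theorem trace_add_smul_one_mul_self {R : Type*} [CommRing R] (A : Matrix m m R) (c : R) :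
    ((A + c • 1) * (A + c • 1)).trace
      = (A * A).trace + 2 * c * A.trace + c ^ 2 * Fintype.card m := by
  simp only [add_mul, mul_add, Matrix.smul_mul, Matrix.mul_smul, mul_one, one_mul, smul_smul,
    trace_add, trace_smul, trace_one, smul_eq_mul]
  ring

theorem re_trace_add_smul_one_mul_self_of_trace_eq {A : Matrix m m ℂ} {c : ℝ}
    (hA : A.trace = -(c * Fintype.card m)) :
    ((A + (c : ℂ) • 1) * (A + (c : ℂ) • 1)).trace.re
      = (A * A).trace.re - c ^ 2 * Fintype.card m := by
  have hexp : (A * A).trace + 2 * c * -(c * Fintype.card m) + (c : ℂ) ^ 2 * Fintype.card m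
      = (A * A).trace - ((c ^ 2 * Fintype.card m : ℝ) : ℂ) := by
    push_cast; ring
  rw [trace_add_smul_one_mul_self, hA, hexp, Complex.sub_re, Complex.ofReal_re]

end Matrix

theorem mse_randomized_le_general
    {n : ℕ} (hn : 0 < n)
    (ρ τ : Matrix (Fin n) (Fin n) ℂ)
    (hρ : ρ.PosSemidef)
    (hτtr : τ.trace = 1) :
    (let ρR : Matrix (Fin n) (Fin n) ℂ :=
        ρ + (((1 : ℂ) - ρ.trace) / (n : ℂ)) • (1 : Matrix (Fin n) (Fin n) ℂ);
      ((ρR - τ) * (ρR - τ)).trace.re ≤ ((ρ - τ) * (ρ - τ)).trace.re ∧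
        (((ρR - τ) * (ρR - τ)).trace.re = ((ρ - τ) * (ρ - τ)).trace.re ↔
          ρ.trace = 1)) := by
  intro ρR
  have hn_ne : (n : ℝ) ≠ 0 := by positivity
  have hρtr := hρ.isHermitian.ofReal_re_trace
  set s : ℝ := 1 - ρ.trace.re
  have hc : (1 - ρ.trace) / n = ((s / n : ℝ) : ℂ) := by rw [← hρtr]; push_cast [s]; ring
  have hR : ρR - τ = (ρ - τ) + ((s / n : ℝ) : ℂ) • 1 := by
    rw [← hc]; simp only [ρR]; abel
  have htr_diff : (ρ - τ).trace = -((s / n : ℝ) * Fintype.card (Fin n)) := by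
    rw [trace_sub, hτtr, ← hρtr, Fintype.card_fin]; push_cast [s]; field_simp; ring
  have hloss : ((ρR - τ) * (ρR - τ)).trace.re = ((ρ - τ) * (ρ - τ)).trace.re - s ^ 2 / n := by
    rw [hR, re_trace_add_smul_one_mul_self_of_trace_eq htr_diff, Fintype.card_fin]
    field_simp
  rw [hloss]
  refine ⟨sub_le_self _ (by positivity), ?_⟩
  rw [sub_eq_self, div_eq_zero_iff, or_iff_left hn_ne, pow_eq_zero_iff two_ne_zero, sub_eq_zero,
    eq_comm, ← Complex.ofReal_inj, hρtr, Complex.ofReal_one]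

/-- For positive semidefinite `ρ` with `Tr ρ ≤ 1` and Hermitian `τ` with `Tr τ = 1`, the
randomized output `ρ_R = ρ + (1 - Tr ρ) I / n` satisfies
`Tr((ρ_R - τ)²) ≤ Tr((ρ - τ)²)`, with equality iff `Tr ρ = 1`. -/
theorem mse_randomized_le
    {n : ℕ} (hn : 0 < n)
    (ρ τ : Matrix (Fin n) (Fin n) ℂ)
    (hρ : ρ.PosSemidef) (htr : ρ.trace.re ≤ 1)
    (hτ : τ.IsHermitian) (hτtr : τ.trace = 1) :
    (let ρR : Matrix (Fin n) (Fin n) ℂ :=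
        ρ + (((1 : ℂ) - ρ.trace) / (n : ℂ)) • (1 : Matrix (Fin n) (Fin n) ℂ);
      ((ρR - τ) * (ρR - τ)).trace.re ≤ ((ρ - τ) * (ρ - τ)).trace.re ∧
        (((ρR - τ) * (ρR - τ)).trace.re = ((ρ - τ) * (ρ - τ)).trace.re ↔
          ρ.trace = 1)) :=
  mse_randomized_le_general hn ρ τ hρ hτtr
end

section
/- Let A and B be finite nonempty index types, let U be a unitary complex matrix indexed by A × B, let σ be a positive semidefinite complex matrix indexed by A × B, and let D₁, D₂ be real diagonal matrices indexed by B with 0 ⪯ D₁ ⪯ D₂ ⪯ I. Then Tr_B(U σ U† (I_A ⊗ D₁)) ⪯ Tr_B(U σ U† (I_A ⊗ D₂)) in the Loewner order, where (Tr_B M)(a,a') = ∑_{b ∈ B} M((a,b),(a',b)). That is, the post-selected output of the hybrid tensor network channel is monotone in the reduction operator. -/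
open Matrix ComplexOrder Kronecker

/-! Weighting the `B`-factor by a diagonal `D` before tracing it out sums the diagonal blocks
`M((·, b), (·, b))` of `M` with weights `D b b`. Each block is a principal submatrix of `M`, hence
positive semidefinite when `M = U σ Uᴴ` is, so the difference of the two outputs is a sum of
positive semidefinite blocks with weights `d₂ b - d₁ b ≥ 0`. -/

lemma ptraceB_mul_one_kronecker_diagonal {A B : Type*} [Fintype A] [Fintype B]
    [DecidableEq A] [DecidableEq B] (M : Matrix (A × B) (A × B) ℂ) (e : B → ℂ) :
    ptraceB (M * ((1 : Matrix A A ℂ) ⊗ₖ diagonal e)) =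
      ∑ b, e b • M.submatrix (·, b) (·, b) := by
  ext a a'
  simp [ptraceB, mul_apply, Fintype.sum_prod_type, one_apply, diagonal_apply, Matrix.sum_apply,
    mul_comm]

lemma Matrix.PosSemidef.sum_smul_submatrix {m n ι : Type*} [Fintype m] [Fintype n]
    {M : Matrix n n ℂ} (hM : M.PosSemidef) (s : Finset ι) (f : ι → m → n) {e : ι → ℝ}
    (he : ∀ i ∈ s, 0 ≤ e i) :
    (∑ i ∈ s, (e i : ℂ) • M.submatrix (f i) (f i)).PosSemidef :=
  posSemidef_sum s fun i hi =>
    (hM.submatrix (f i)).smul (Complex.zero_le_real.mpr (he i hi))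

theorem postSelected_monotone_in_reduction_general
    {A B : Type*} [Fintype A] [Fintype B]
    [DecidableEq A] [DecidableEq B]
    (U : Matrix (A × B) (A × B) ℂ)
    (σ : Matrix (A × B) (A × B) ℂ) (hσ : σ.PosSemidef)
    (d₁ d₂ : B → ℝ) (hd : ∀ b, d₁ b ≤ d₂ b) :
    (ptraceB (U * σ * Uᴴ * ((1 : Matrix A A ℂ) ⊗ₖ Matrix.diagonal fun b => (d₂ b : ℂ))) -
      ptraceB (U * σ * Uᴴ * ((1 : Matrix A A ℂ) ⊗ₖ
        Matrix.diagonal fun b => (d₁ b : ℂ)))).PosSemidef := by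
  have hM : (U * σ * Uᴴ).PosSemidef := by
    simpa only [Matrix.mul_assoc] using hσ.mul_mul_conjTranspose_same U
  rw [ptraceB_mul_one_kronecker_diagonal, ptraceB_mul_one_kronecker_diagonal,
    ← Finset.sum_sub_distrib]
  simp_rw [← sub_smul, ← Complex.ofReal_sub]
  exact hM.sum_smul_submatrix _ _ fun b _ => sub_nonneg.mpr (hd b)

/-- Monotonicity of the post-selected output in the reduction operator: for a unitary `U`,
a positive semidefinite `σ`, and real diagonal matrices `0 ⪯ D₁ ⪯ D₂ ⪯ I` on `B`,
`Tr_B (U σ U† (I_A ⊗ D₁)) ⪯ Tr_B (U σ U† (I_A ⊗ D₂))` in the Loewner order. -/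
theorem postSelected_monotone_in_reduction
    {A B : Type*} [Fintype A] [Fintype B] [Nonempty A] [Nonempty B]
    [DecidableEq A] [DecidableEq B]
    (U : Matrix (A × B) (A × B) ℂ) (hU : U ∈ Matrix.unitaryGroup (A × B) ℂ)
    (σ : Matrix (A × B) (A × B) ℂ) (hσ : σ.PosSemidef)
    (d₁ d₂ : B → ℝ) (hd₁0 : ∀ b, 0 ≤ d₁ b) (hd : ∀ b, d₁ b ≤ d₂ b) (hd₂1 : ∀ b, d₂ b ≤ 1) :
    (ptraceB (U * σ * Uᴴ * ((1 : Matrix A A ℂ) ⊗ₖ Matrix.diagonal fun b => (d₂ b : ℂ))) -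
      ptraceB (U * σ * Uᴴ * ((1 : Matrix A A ℂ) ⊗ₖ
        Matrix.diagonal fun b => (d₁ b : ℂ)))).PosSemidef :=
  postSelected_monotone_in_reduction_general U σ hσ d₁ d₂ hd
end
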